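/- Clarke's generalized Jacobian is a QDQ: let Ω ⊆ ℝ^n be an open set, F : Ω → ℝ^m a Lipschitz continuous (single-valued) map, and x̄ ∈ Ω. Then Clarke's generalized Jacobian ∂_C F(x̄) — the closed convex hull of the set of all limits lim_{k→∞} DF(x_k) over sequences (x_k) of differentiability points of F converging to x̄ — is a Quasi Differential Quotient of F (regarded as the set-valued map x ⇝ {F(x)}) at (x̄, F(x̄)) in the direction of ℝ^n. -/

import Mathlib

open Metric Set Filter Topology

/-- A modulus: a non-decreasing non-negative function `ρ : [0,∞) → [0,∞)`
with `ρ(δ) → 0` as `δ → 0⁺`. -/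
def IsModulus (ρ : ℝ → ℝ) : Prop :=
  (∀ δ, 0 ≤ ρ δ) ∧ MonotoneOn ρ (Set.Ici 0) ∧
    Filter.Tendsto ρ (nhdsWithin 0 (Set.Ioi 0)) (nhds 0)

/-- `Λ` is a Quasi Differential Quotient (QDQ) of the set-valued map `Fm` at `(xb, yb)`
in the direction of `Γ`. -/
def IsQDQ {E F : Type*} [NormedAddCommGroup E] [NormedSpace ℝ E]
    [NormedAddCommGroup F] [NormedSpace ℝ F]
    (Fm : E → Set F) (xb : E) (yb : F) (Γ : Set E) (Λ : Set (E →L[ℝ] F)) : Prop :=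
  IsCompact Λ ∧
  ∃ δs : ℝ, 0 < δs ∧ ∃ ρ : ℝ → ℝ, IsModulus ρ ∧
    ∀ δ : ℝ, 0 < δ → δ < δs →
      ∃ (L : E → E →L[ℝ] F) (h : E → F),
        ContinuousOn (fun x => (L x, h x)) (Metric.closedBall xb δ ∩ Γ) ∧
        ∀ x ∈ Metric.closedBall xb δ ∩ Γ,
          Metric.infDist (L x) Λ ≤ ρ δ ∧ ‖h x‖ ≤ δ * ρ δ ∧
          yb + (L x) (x - xb) + h x ∈ Fm x

open MeasureTheory
open scoped NNReal Convolution

/-! Extend `F` to a globally `K`-Lipschitz map `G`. By compactness of bounded sets of derivatives,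
every derivative of `G` at a point `a` near `x̄` lies within `σ(|a - x̄|)` of `Λ = ∂_C F(x̄)` for
a modulus `σ`. Mollifying `G` at scale `δ²` gives a `C¹` map `g` with `‖g - G‖ ≤ K δ²` whose
derivatives on `B(x̄, δ)` are averages of derivatives of `G` on `B(x̄, 2δ)`, hence lie in the
closed convex set `{A | dist(A, Λ) ≤ σ(2δ)}`. Then `L(x) = ∫₀¹ Dg(x̄ + t(x - x̄)) dt` is continuous,
stays in that set, and `L(x)(x - x̄) = g(x) - g(x̄)`, so the remainder
`h(x) = F(x) - F(x̄) - L(x)(x - x̄)` has norm at most `2 K δ²`. -/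

namespace IsModulus

variable {ρ σ : ℝ → ℝ}

theorem add (hρ : IsModulus ρ) (hσ : IsModulus σ) : IsModulus fun δ => ρ δ + σ δ :=
  ⟨fun δ => add_nonneg (hρ.1 δ) (hσ.1 δ), hρ.2.1.add hσ.2.1, by
    simpa using hρ.2.2.add hσ.2.2⟩

theorem comp_mul (hρ : IsModulus ρ) {c : ℝ} (hc : 0 < c) : IsModulus fun δ => ρ (c * δ) := by
  refine ⟨fun δ => hρ.1 _, fun a ha b hb hab => hρ.2.1 ?_ ?_ ?_, hρ.2.2.comp ?_⟩
  · exact mul_nonneg hc.le ha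
  · exact mul_nonneg hc.le hb
  · exact mul_le_mul_of_nonneg_left hab hc.le
  · refine tendsto_nhdsWithin_iff.2 ⟨?_, eventually_nhdsWithin_of_forall fun δ hδ => ?_⟩
    · simpa using ((tendsto_id (x := 𝓝 (0 : ℝ))).const_mul c).mono_left nhdsWithin_le_nhds
    · exact mul_pos hc hδ

end IsModulus

theorem isModulus_mul_max {c : ℝ} (hc : 0 ≤ c) : IsModulus fun δ => c * max δ 0 := by
  refine ⟨fun δ => mul_nonneg hc (le_max_right _ _),
    (monotone_id.max monotone_const).const_mul hc |>.monotoneOn _, ?_⟩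
  have : Continuous fun δ : ℝ => c * max δ 0 := by fun_prop
  simpa using (this.tendsto 0).mono_left nhdsWithin_le_nhds

theorem exists_isModulus_of_forall_eventually_le {X : Type*} [PseudoMetricSpace X] {s : Set X}
    {x : X} {f : X → ℝ} (hbdd : BddAbove (f '' s)) (hf : ∀ c > 0, ∀ᶠ a in 𝓝[s] x, f a ≤ c) :
    ∃ σ : ℝ → ℝ, IsModulus σ ∧ ∀ a ∈ s, ∀ r, dist a x ≤ r → f a ≤ σ r := by
  set σ : ℝ → ℝ := fun r => sSup (insert 0 (f '' (s ∩ closedBall x r)))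
  have hσbdd (r : ℝ) : BddAbove (insert 0 (f '' (s ∩ closedBall x r))) :=
    (hbdd.mono (image_mono inter_subset_left)).insert 0
  have hσ0 (r : ℝ) : 0 ≤ σ r := le_csSup (hσbdd r) (mem_insert _ _)
  have hσmono : Monotone σ := fun r r' hr =>
    csSup_le_csSup (hσbdd r') (insert_nonempty _ _) <| insert_subset_insert <|
      image_mono <| inter_subset_inter_right _ (closedBall_subset_closedBall hr)
  refine ⟨σ, ⟨hσ0, hσmono.monotoneOn _, ?_⟩, fun a ha r hr =>
    le_csSup (hσbdd r) (mem_insert_of_mem _ ⟨a, ⟨ha, hr⟩, rfl⟩)⟩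
  refine tendsto_order.2 ⟨fun c hc => Eventually.of_forall fun r => hc.trans_le (hσ0 r),
    fun c hc => ?_⟩
  obtain ⟨r, hr, hfr⟩ := eventually_nhds_iff_ball.1 (eventually_nhdsWithin_iff.1 (hf (c / 2)
    (half_pos hc)))
  filter_upwards [Ioo_mem_nhdsGT hr] with δ hδ
  refine (csSup_le (insert_nonempty _ _) ?_).trans_lt (half_lt_self hc)
  rintro _ (rfl | ⟨a, ⟨ha, haδ⟩, rfl⟩)
  · exact (half_pos hc).le
  · exact hfr a (closedBall_subset_ball hδ.2 haδ) ha

theorem Convex.convexOn_infDist {E : Type*} [SeminormedAddCommGroup E] [NormedSpace ℝ E]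
    {s : Set E} (hs : Convex ℝ s) : ConvexOn ℝ univ fun x => infDist x s := by
  rcases s.eq_empty_or_nonempty with rfl | hne
  · simpa using convexOn_const (0 : ℝ) convex_univ
  refine ⟨convex_univ, fun x _ y _ a b ha hb hab => le_of_forall_pos_le_add fun ε hε => ?_⟩
  obtain ⟨x', hx's, hx'⟩ := (infDist_lt_iff hne).1 (lt_add_of_pos_right (infDist x s) hε)
  obtain ⟨y', hy's, hy'⟩ := (infDist_lt_iff hne).1 (lt_add_of_pos_right (infDist y s) hε)
  calc infDist (a • x + b • y) s ≤ dist (a • x + b • y) (a • x' + b • y') :=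
        infDist_le_dist_of_mem (hs hx's hy's ha hb hab)
    _ ≤ a * dist x x' + b * dist y y' := by
        refine (dist_add_add_le _ _ _ _).trans (add_le_add ?_ ?_) <;>
          simp [dist_smul₀, abs_of_nonneg, ha, hb]
    _ ≤ a * (infDist x s + ε) + b * (infDist y s + ε) := by gcongr
    _ = a • infDist x s + b • infDist y s + ε := by
        simp only [smul_eq_mul]; linear_combination ε * hab

theorem Convex.integral_smul_mem_of_density {α Y : Type*} [MeasurableSpace α] {μ : Measure α}
    [NormedAddCommGroup Y] [NormedSpace ℝ Y] [CompleteSpace Y] {C : Set Y} (hC : Convex ℝ C)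
    (hCc : IsClosed C) {ψ : α → ℝ} (hψm : Measurable ψ) (hψ0 : ∀ z, 0 ≤ ψ z)
    (hψ1 : ∫ z, ψ z ∂μ = 1) {f : α → Y} (hf : Integrable (fun z => ψ z • f z) μ)
    (hfC : ∀ᵐ z ∂μ, ψ z ≠ 0 → f z ∈ C) :
    ∫ z, ψ z • f z ∂μ ∈ C := by
  set ψ' : α → ℝ≥0 := fun z => (ψ z).toNNReal
  have hψ'm : Measurable ψ' := hψm.real_toNNReal
  have hψψ' (z : α) : (ψ' z : ℝ) = ψ z := Real.coe_toNNReal _ (hψ0 z)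
  set ν := μ.withDensity fun z => ψ' z
  have : IsProbabilityMeasure ν := by
    have hψi : Integrable ψ μ := .of_integral_ne_zero (by simp [hψ1])
    rw [isProbabilityMeasure_iff, withDensity_apply _ MeasurableSet.univ, setLIntegral_univ,
      lintegral_coe_eq_integral _ (by simpa only [hψψ'] using hψi)]
    simp [hψψ', hψ1]
  have hfν : Integrable f ν := by
    rw [integrable_withDensity_iff_integrable_smul hψ'm]
    simpa only [NNReal.smul_def, hψψ'] using hf
  have hfCν : ∀ᵐ z ∂ν, f z ∈ C := by
    rw [ae_withDensity_iff (by fun_prop)]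
    filter_upwards [hfC] with z hz hψz
    exact hz fun h => hψz (by simp [ψ', h])
  have hmem := hC.integral_mem hCc hfCν hfν
  rw [integral_withDensity_eq_integral_smul hψ'm] at hmem
  simpa only [NNReal.smul_def, hψψ'] using hmem

section Mollification

variable {E F : Type*} [NormedAddCommGroup E] [NormedSpace ℝ E] [FiniteDimensional ℝ E]
  [NormedAddCommGroup F] [NormedSpace ℝ F] [FiniteDimensional ℝ F] {K : ℝ≥0} {G : E → F}

theorem LipschitzWith.ae_differentiableAt_sub [MeasurableSpace E] [BorelSpace E] {μ : Measure E}
    [μ.IsAddHaarMeasure] (hG : LipschitzWith K G) (y : E) :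
    ∀ᵐ z ∂μ, DifferentiableAt ℝ G (y - z) :=
  (Measure.measurePreserving_sub_left μ y).quasiMeasurePreserving.ae hG.ae_differentiableAt

theorem LipschitzWith.hasFDerivAt_convolution_right [MeasurableSpace E] [BorelSpace E]
    {μ : Measure E} [μ.IsAddHaarMeasure] (hG : LipschitzWith K G) {ψ : E → ℝ}
    (hψ : Continuous ψ) (hψs : HasCompactSupport ψ) (y : E) :
    HasFDerivAt (ψ ⋆[ContinuousLinearMap.lsmul ℝ ℝ, μ] G)
      (∫ z, ψ z • fderiv ℝ G (y - z) ∂μ) y := by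
  have hGx (x : E) : Continuous fun z => G (x - z) := hG.continuous.comp (by fun_prop)
  have hint := hasFDerivAt_integral_of_dominated_loc_of_lip' (μ := μ) (x₀ := y)
    (F := fun x z => ψ z • G (x - z)) (F' := fun z => ψ z • fderiv ℝ G (y - z))
    (bound := fun z => ‖ψ z‖ * K) univ_mem
    (fun x _ => (hψ.smul (hGx x)).aestronglyMeasurable)
    ((hψ.smul (hGx y)).integrable_of_hasCompactSupport hψs.smul_right)
    (hψ.aestronglyMeasurable.smul (by fun_prop : Measurable _).aestronglyMeasurable)
    (Eventually.of_forall fun z x _ => ?_)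
    ((hψ.integrable_of_hasCompactSupport hψs).norm.mul_const _)
    ((hG.ae_differentiableAt_sub y).mono fun z hz => ?_)
  · convert hint.2 using 1
    ext x
    exact convolution_lsmul
  · rw [← smul_sub, norm_smul, mul_assoc]
    refine mul_le_mul_of_nonneg_left ((hG.norm_sub_le _ _).trans_eq ?_) (norm_nonneg _)
    rw [sub_sub_sub_cancel_right]
  · have hGz : HasFDerivAt (fun x => G (x - z)) (fderiv ℝ G (y - z)) y := by
      simpa [Function.comp_def] using hz.hasFDerivAt.comp y ((hasFDerivAt_id y).sub_const z)
    exact hGz.const_smul (ψ z)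

/-- `g` is the mollification of `G` at scale `ε`, whose derivative at `y` is a weighted average of
derivatives of `G` on `ball y ε`. -/
theorem LipschitzWith.exists_contDiff_approx (hG : LipschitzWith K G) {ε : ℝ} (hε : 0 < ε) :
    ∃ g : E → F, ContDiff ℝ 1 g ∧ (∀ y, dist (g y) (G y) ≤ K * ε) ∧
      ∀ y, fderiv ℝ g y ∈
        closure (convexHull ℝ (fderiv ℝ G '' {a ∈ ball y ε | DifferentiableAt ℝ G a})) := by
  borelize E
  set φ : ContDiffBump (0 : E) := ⟨ε / 2, ε, half_pos hε, half_lt_self hε⟩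
  set μ : Measure E := .addHaar
  refine ⟨φ.normed μ ⋆[ContinuousLinearMap.lsmul ℝ ℝ, μ] G,
    φ.hasCompactSupport_normed.contDiff_convolution_left _ φ.contDiff_normed
      hG.continuous.locallyIntegrable,
    fun y => φ.dist_normed_convolution_le hG.continuous.aestronglyMeasurable fun x hx => ?_,
    fun y => ?_⟩
  · exact (hG.dist_le_mul x y).trans (mul_le_mul_of_nonneg_left (mem_ball.1 hx).le K.2)
  rw [(hG.hasFDerivAt_convolution_right φ.continuous_normed φ.hasCompactSupport_normed y).fderiv]
  refine (convex_convexHull ℝ _).closure.integral_smul_mem_of_density isClosed_closure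
    φ.continuous_normed.measurable φ.nonneg_normed φ.integral_normed
    (φ.integrable_normed.smul_bdd K (by fun_prop : Measurable _).aestronglyMeasurable
      (Eventually.of_forall fun z => norm_fderiv_le_of_lipschitz ℝ hG)) ?_
  filter_upwards [hG.ae_differentiableAt_sub y] with z hdz hψz
  have hz : z ∈ ball 0 ε := φ.support_normed_eq (μ := μ) ▸ hψz
  exact subset_closure <| subset_convexHull ℝ _ ⟨y - z, ⟨by simpa using hz, hdz⟩, rfl⟩

end Mollification

section MeanFDeriv

variable {E F : Type*} [NormedAddCommGroup E] [NormedSpace ℝ E]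
  [NormedAddCommGroup F] [NormedSpace ℝ F] {f : E → F}

noncomputable def meanFDeriv (f : E → F) (a b : E) : E →L[ℝ] F :=
  ∫ t in (0 : ℝ)..1, fderiv ℝ f (a + t • (b - a))

theorem ContDiff.continuous_meanFDeriv (hf : ContDiff ℝ 1 f) (a : E) :
    Continuous (meanFDeriv f a) := by
  have := hf.continuous_fderiv one_ne_zero
  exact intervalIntegral.continuous_parametric_intervalIntegral_of_continuous' (by fun_prop) 0 1

theorem ContDiff.meanFDeriv_apply_sub [CompleteSpace F] (hf : ContDiff ℝ 1 f) (a b : E) :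
    meanFDeriv f a b (b - a) = f b - f a := by
  have hcont : Continuous fun t : ℝ => fderiv ℝ f (a + t • (b - a)) :=
    (hf.continuous_fderiv one_ne_zero).comp (by fun_prop)
  have hline (t : ℝ) : HasDerivAt (fun t : ℝ => a + t • (b - a)) (b - a) t := by
    simpa using ((hasDerivAt_id t).smul_const (b - a)).const_add a
  rw [meanFDeriv, ContinuousLinearMap.intervalIntegral_apply (hcont.intervalIntegrable 0 1)]
  simpa using intervalIntegral.integral_eq_sub_of_hasDerivAt
    (fun t _ => ((hf.differentiable one_ne_zero _).hasFDerivAt.comp_hasDerivAt t (hline t)))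
    ((hcont.clm_apply continuous_const).intervalIntegrable 0 1)

theorem ContDiff.meanFDeriv_mem [CompleteSpace F] (hf : ContDiff ℝ 1 f) {a b : E}
    {C : Set (E →L[ℝ] F)} (hC : Convex ℝ C) (hCc : IsClosed C)
    (hfC : ∀ y ∈ segment ℝ a b, fderiv ℝ f y ∈ C) :
    meanFDeriv f a b ∈ C := by
  have hcont : Continuous fun t : ℝ => fderiv ℝ f (a + t • (b - a)) :=
    (hf.continuous_fderiv one_ne_zero).comp (by fun_prop)
  have : IsProbabilityMeasure (volume.restrict (Ioc (0 : ℝ) 1)) := ⟨by simp⟩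
  rw [meanFDeriv, intervalIntegral.integral_of_le zero_le_one]
  refine hC.integral_mem hCc ((ae_restrict_iff' measurableSet_Ioc).2 <| Eventually.of_forall
    fun t ht => hfC _ ?_) hcont.integrableOn_Ioc
  rw [segment_eq_image']
  exact ⟨t, Ioc_subset_Icc_self ht, rfl⟩

end MeanFDeriv

theorem IsQDQ.congr_of_eventuallyEq {E F : Type*} [NormedAddCommGroup E] [NormedSpace ℝ E]
    [NormedAddCommGroup F] [NormedSpace ℝ F] {Fm Fm' : E → Set F} {x₀ : E} {y₀ : F}
    {Γ : Set E} {Λ : Set (E →L[ℝ] F)} (h : IsQDQ Fm x₀ y₀ Γ Λ) (hFm : Fm =ᶠ[𝓝 x₀] Fm') :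
    IsQDQ Fm' x₀ y₀ Γ Λ := by
  obtain ⟨hΛ, δs, hδs, ρ, hρ, hL⟩ := h
  obtain ⟨r, hr, hrFm⟩ := eventually_nhds_iff_ball.1 hFm
  refine ⟨hΛ, min δs r, lt_min hδs hr, ρ, hρ, fun δ hδ hδr => ?_⟩
  obtain ⟨L, h, hc, hLh⟩ := hL δ hδ (hδr.trans_le (min_le_left _ _))
  refine ⟨L, h, hc, fun x hx => ?_⟩
  obtain ⟨hLΛ, hh, hmem⟩ := hLh x hx
  refine ⟨hLΛ, hh, ?_⟩
  rwa [← hrFm x (closedBall_subset_ball (hδr.trans_le (min_le_right _ _)) hx.1)]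

section QDQ

variable {E F : Type*} [NormedAddCommGroup E] [NormedSpace ℝ E] [FiniteDimensional ℝ E]
  [NormedAddCommGroup F] [NormedSpace ℝ F] [FiniteDimensional ℝ F] {K : ℝ≥0} {G : E → F}

theorem LipschitzWith.exists_continuous_linearization (hG : LipschitzWith K G) (x₀ : E)
    {δ ε : ℝ} (hε : 0 < ε) {C : Set (E →L[ℝ] F)} (hC : Convex ℝ C) (hCc : IsClosed C)
    (hGC : ∀ a ∈ closedBall x₀ (δ + ε), DifferentiableAt ℝ G a → fderiv ℝ G a ∈ C) :
    ∃ L : E → E →L[ℝ] F, Continuous L ∧ (∀ x ∈ closedBall x₀ δ, L x ∈ C) ∧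
      ∀ x, ‖G x - G x₀ - L x (x - x₀)‖ ≤ 2 * K * ε := by
  obtain ⟨g, hg, hgG, hgC⟩ := hG.exists_contDiff_approx hε
  have hhull (y : E) (hy : y ∈ closedBall x₀ δ) :
      closure (convexHull ℝ (fderiv ℝ G '' {a ∈ ball y ε | DifferentiableAt ℝ G a})) ⊆ C := by
    refine closure_minimal (convexHull_min (image_subset_iff.2 fun a ha => hGC a ?_ ha.2) hC) hCc
    rw [mem_closedBall, add_comm] at *
    exact (dist_triangle a y x₀).trans (add_le_add (mem_ball.1 ha.1).le hy)
  refine ⟨meanFDeriv g x₀, hg.continuous_meanFDeriv x₀, fun x hx => ?_, fun x => ?_⟩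
  · refine hg.meanFDeriv_mem hC hCc fun y hy => hhull y ?_ (hgC y)
    exact (convex_closedBall x₀ δ).segment_subset (mem_closedBall_self (dist_nonneg.trans hx))
      hx hy
  rw [hg.meanFDeriv_apply_sub]
  calc ‖G x - G x₀ - (g x - g x₀)‖ = ‖(g x - G x) - (g x₀ - G x₀)‖ := by
        rw [← norm_neg]; congr 1; abel
    _ ≤ dist (g x) (G x) + dist (g x₀) (G x₀) := by
        simpa only [dist_eq_norm] using _root_.norm_sub_le _ _
    _ ≤ K * ε + K * ε := add_le_add (hgG x) (hgG x₀)
    _ = 2 * K * ε := by ring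

theorem LipschitzWith.isQDQ_of_forall_eventually_infDist_fderiv_le (hG : LipschitzWith K G)
    {x₀ : E} {Λ : Set (E →L[ℝ] F)} (hΛc : IsCompact Λ) (hΛ : Convex ℝ Λ)
    (hGΛ : ∀ c > 0, ∀ᶠ a in 𝓝[{a | DifferentiableAt ℝ G a}] x₀, infDist (fderiv ℝ G a) Λ ≤ c) :
    IsQDQ (fun x => {G x}) x₀ (G x₀) univ Λ := by
  have hbdd : BddAbove ((fun a => infDist (fderiv ℝ G a) Λ) '' {a | DifferentiableAt ℝ G a}) :=
    ⟨infDist 0 Λ + K, forall_mem_image.2 fun a _ => infDist_le_infDist_add_dist.trans <|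
      add_le_add_right (by simpa using norm_fderiv_le_of_lipschitz ℝ hG) _⟩
  obtain ⟨σ, hσ, hσle⟩ := exists_isModulus_of_forall_eventually_le hbdd hGΛ
  refine ⟨hΛc, 1, one_pos, fun δ => σ (2 * δ) + 2 * K * max δ 0,
    (hσ.comp_mul two_pos).add (isModulus_mul_max (by positivity)), fun δ hδ hδ1 => ?_⟩
  -- mollifying at scale `δ ^ 2` costs `O(δ ^ 2)` in `h` and only enlarges the ball to
  -- radius `2 * δ`
  obtain ⟨L, hLc, hLΛ, hLG⟩ := hG.exists_continuous_linearization x₀ (pow_pos hδ 2)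
    (by simpa using hΛ.convexOn_infDist.convex_le (σ (2 * δ)))
    (isClosed_le (continuous_infDist_pt Λ) continuous_const) fun a ha hda =>
      hσle a hda _ <| (mem_closedBall.1 ha).trans (by nlinarith)
  have hcont : Continuous fun x => (L x, G x - G x₀ - L x (x - x₀)) := by
    have := hG.continuous; fun_prop
  refine ⟨L, fun x => G x - G x₀ - L x (x - x₀), hcont.continuousOn,
    fun x ⟨hx, _⟩ => ⟨?_, ?_, ?_⟩⟩
  · exact (hLΛ x hx).trans (le_add_of_nonneg_right (by positivity))
  · calc ‖G x - G x₀ - L x (x - x₀)‖ ≤ 2 * K * δ ^ 2 := hLG x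
      _ ≤ δ * (σ (2 * δ) + 2 * K * max δ 0) := by
        rw [max_eq_left hδ.le]; nlinarith [hσ.1 (2 * δ)]
  · simp

end QDQ

section Bouligand

variable {E F : Type*} [NormedAddCommGroup E] [NormedSpace ℝ E]
  [NormedAddCommGroup F] [NormedSpace ℝ F] {K : ℝ≥0} {f : E → F}

/-- Clarke's generalized Jacobian is the closed convex hull of this set. -/
def bouligandJacobian (f : E → F) (Ω : Set E) (x : E) : Set (E →L[ℝ] F) :=
  {L | ∃ u : ℕ → E, (∀ k, u k ∈ Ω ∧ DifferentiableAt ℝ f (u k)) ∧ Tendsto u atTop (𝓝 x) ∧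
    Tendsto (fun k => fderiv ℝ f (u k)) atTop (𝓝 L)}

theorem bouligandJacobian_congr {g : E → F} {Ω : Set E} (hΩ : IsOpen Ω) (hfg : EqOn f g Ω)
    (x : E) : bouligandJacobian f Ω x = bouligandJacobian g Ω x := by
  have hloc {a : E} (ha : a ∈ Ω) : f =ᶠ[𝓝 a] g := eventuallyEq_of_mem (hΩ.mem_nhds ha) hfg
  ext L
  refine exists_congr fun u => ⟨fun ⟨hu, hux, huL⟩ => ⟨fun k => ⟨(hu k).1, ?_⟩, hux, ?_⟩,
    fun ⟨hu, hux, huL⟩ => ⟨fun k => ⟨(hu k).1, ?_⟩, hux, ?_⟩⟩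
  · exact (hloc (hu k).1).differentiableAt_iff.1 (hu k).2
  · exact huL.congr fun k => (hloc (hu k).1).fderiv_eq
  · exact (hloc (hu k).1).differentiableAt_iff.2 (hu k).2
  · exact huL.congr fun k => (hloc (hu k).1).fderiv_eq.symm

theorem LipschitzWith.bouligandJacobian_subset_closedBall (hf : LipschitzWith K f) (Ω : Set E)
    (x : E) : bouligandJacobian f Ω x ⊆ closedBall 0 K := by
  rintro L ⟨u, -, -, huL⟩
  exact isClosed_closedBall.mem_of_tendsto huL <| Eventually.of_forall fun k =>
    mem_closedBall_zero_iff.2 (norm_fderiv_le_of_lipschitz ℝ hf)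

variable [FiniteDimensional ℝ E] [FiniteDimensional ℝ F]

theorem LipschitzWith.isCompact_closure_convexHull_bouligandJacobian (hf : LipschitzWith K f)
    (Ω : Set E) (x : E) : IsCompact (closure (convexHull ℝ (bouligandJacobian f Ω x))) :=
  (isCompact_closedBall 0 K).of_isClosed_subset isClosed_closure <| closure_minimal
    (convexHull_min (hf.bouligandJacobian_subset_closedBall Ω x) (convex_closedBall 0 K))
    isClosed_closedBall

theorem LipschitzWith.forall_eventually_infDist_fderiv_le (hf : LipschitzWith K f) {Ω : Set E}
    {x : E} (hΩ : Ω ∈ 𝓝 x) {Λ : Set (E →L[ℝ] F)} (hΛ : bouligandJacobian f Ω x ⊆ Λ) :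
    ∀ c > 0, ∀ᶠ a in 𝓝[{a | DifferentiableAt ℝ f a}] x, infDist (fderiv ℝ f a) Λ ≤ c := by
  intro c hc
  by_contra h
  rw [not_eventually, frequently_nhdsWithin_iff] at h
  obtain ⟨u, hux, hu⟩ := exists_seq_forall_of_frequently (h.and_eventually hΩ)
  obtain ⟨L, -, φ, hφ, hL⟩ := (isCompact_closedBall (0 : E →L[ℝ] F) K).tendsto_subseq
    fun k => mem_closedBall_zero_iff.2 (norm_fderiv_le_of_lipschitz ℝ hf (x₀ := u k))
  have hLΛ : L ∈ Λ := hΛ ⟨u ∘ φ, fun k => ⟨(hu _).2, (hu _).1.2⟩, hux.comp hφ.tendsto_atTop, hL⟩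
  have hlim : Tendsto (fun k => infDist (fderiv ℝ f (u (φ k))) Λ) atTop (𝓝 0) := by
    simpa [infDist_zero_of_mem hLΛ, Function.comp_def] using
      ((continuous_infDist_pt Λ).tendsto L).comp hL
  obtain ⟨k, hk⟩ := (hlim.eventually (ge_mem_nhds hc)).exists
  exact (hu (φ k)).1.1 hk

end Bouligand

/-- Clarke's generalized Jacobian of a Lipschitz map is a QDQ. -/
theorem clarke_jacobian_isQDQ {n m : ℕ}
    (Ω : Set (EuclideanSpace ℝ (Fin n))) (hΩ : IsOpen Ω)
    (F : EuclideanSpace ℝ (Fin n) → EuclideanSpace ℝ (Fin m))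
    (K : NNReal) (hF : LipschitzOnWith K F Ω)
    (xb : EuclideanSpace ℝ (Fin n)) (hxb : xb ∈ Ω) :
    IsQDQ (fun x => {F x}) xb (F xb) Set.univ
      (closure (convexHull ℝ
        {L : EuclideanSpace ℝ (Fin n) →L[ℝ] EuclideanSpace ℝ (Fin m) |
          ∃ u : ℕ → EuclideanSpace ℝ (Fin n),
            (∀ k, u k ∈ Ω ∧ DifferentiableAt ℝ F (u k)) ∧
            Filter.Tendsto u Filter.atTop (nhds xb) ∧
            Filter.Tendsto (fun k => fderiv ℝ F (u k)) Filter.atTop (nhds L)})) := by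
  obtain ⟨G, hG, hFG⟩ := hF.extend_finite_dimension
  have hΩxb : Ω ∈ 𝓝 xb := hΩ.mem_nhds hxb
  have hQDQ := hG.isQDQ_of_forall_eventually_infDist_fderiv_le (x₀ := xb)
    (hG.isCompact_closure_convexHull_bouligandJacobian Ω xb) (convex_convexHull ℝ _).closure
    (hG.forall_eventually_infDist_fderiv_le hΩxb ((subset_convexHull ℝ _).trans subset_closure))
  rw [← bouligandJacobian_congr hΩ hFG, ← hFG hxb] at hQDQ
  exact hQDQ.congr_of_eventuallyEq (eventually_of_mem hΩxb fun x hx => by simp [hFG hx])
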